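/- Let N be odd and let f, h be monic polynomials in (Z/4Z)[X] with f h = X^N - 1. If gcd(h, f*) = 1, then gcd(f, h*) = 1. -/

import Mathlib

/-!
Over `ZMod 4`, `X ^ N - 1` is its own reciprocal and `recip` is multiplicative on monic
polynomials with unit constant term, so `f* h* = f h`. Hence `h` divides `f* h*`, and being
coprime to `f*` it divides `h*`; as `h*` is monic of degree at most `deg h`, `h* = h`.
Cancelling `h` gives `f* = f`, and the hypothesis becomes `gcd(h, f) = 1`.
-/

open Polynomial

/-- The reciprocal polynomial `f*(X) = a0⁻¹ X^(deg f) f(1/X)` over `ZMod 4`. -/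
noncomputable def recip (f : (ZMod 4)[X]) : (ZMod 4)[X] :=
  C (f.coeff 0)⁻¹ * f.reverse

theorem Polynomial.reverse_X_pow_sub_one {R : Type*} [Ring R] (N : ℕ) :
    ((X : R[X]) ^ N - 1).reverse = 1 - X ^ N := by
  nontriviality R
  rw [sub_eq_add_neg, ← C_1, ← C_neg, reverse_add_C, natDegree_X_pow]
  simp [reverse, sub_eq_add_neg]

theorem Polynomial.isUnit_coeff_zero_of_dvd_X_pow_sub_one {R : Type*} [CommRing R] {f : R[X]}
    {N : ℕ} (hN : N ≠ 0) (hf : f ∣ X ^ N - 1) : IsUnit (f.coeff 0) := by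
  obtain ⟨g, hg⟩ := hf
  have h0 : f.coeff 0 * g.coeff 0 = -1 := by
    simpa [mul_coeff_zero, coeff_X_pow, Ne.symm hN] using (congrArg (coeff · 0) hg).symm
  exact IsUnit.of_mul_eq_one (-g.coeff 0) (by rw [mul_neg, h0, neg_neg])

theorem ZMod.mul_inv_of_isUnit {n : ℕ} {a b : ZMod n} (ha : IsUnit a) (hb : IsUnit b) :
    (a * b)⁻¹ = a⁻¹ * b⁻¹ := by
  obtain ⟨u, rfl⟩ := ha
  obtain ⟨v, rfl⟩ := hb
  rw [← Units.val_mul, ZMod.inv_coe_unit, ZMod.inv_coe_unit, ZMod.inv_coe_unit, mul_inv,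
    Units.val_mul, mul_comm]

instance : Fact (1 < 4) := ⟨by norm_num⟩

theorem recip_mul {f g : (ZMod 4)[X]} (hf : f.Monic) (hg : g.Monic) (hf0 : IsUnit (f.coeff 0))
    (hg0 : IsUnit (g.coeff 0)) : recip (f * g) = recip f * recip g := by
  rw [recip, recip, recip, mul_coeff_zero, ZMod.mul_inv_of_isUnit hf0 hg0, C_mul,
    reverse_mul (by simp [hf.leadingCoeff, hg.leadingCoeff])]
  ring

theorem recip_X_pow_sub_one (N : ℕ) : recip (X ^ N - 1) = X ^ N - 1 := by
  rcases eq_or_ne N 0 with rfl | hN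
  · simp [recip]
  · have : ((-1 : ZMod 4))⁻¹ = -1 := (ZMod.inv_coe_unit (-1)).trans (by simp)
    simp [recip, reverse_X_pow_sub_one, coeff_X_pow, Ne.symm hN, this]

theorem recip_monic {f : (ZMod 4)[X]} (hf0 : IsUnit (f.coeff 0)) : (recip f).Monic :=
  monic_C_mul_of_mul_leadingCoeff_eq_one <| by
    rw [reverse_leadingCoeff, trailingCoeff_eq_coeff_zero hf0.ne_zero,
      ZMod.inv_mul_of_unit _ hf0]

theorem natDegree_recip_le (f : (ZMod 4)[X]) : (recip f).natDegree ≤ f.natDegree :=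
  (natDegree_C_mul_le _ _).trans (reverse_natDegree_le f)

theorem recip_eq_self_of_dvd {h : (ZMod 4)[X]} (hh : h.Monic) (hh0 : IsUnit (h.coeff 0))
    (hdvd : h ∣ recip h) : recip h = h :=
  eq_of_monic_of_dvd_of_natDegree_le hh (recip_monic hh0) hdvd (natDegree_recip_le h)

theorem coprime_recip_swap_general (N : ℕ) (f h : (ZMod 4)[X])
    (hf : f.Monic) (hh : h.Monic)
    (hfh : f * h = (X : (ZMod 4)[X]) ^ N - 1)
    (hcop : IsCoprime h (recip f)) :
    IsCoprime f (recip h) := by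
  have hN : N ≠ 0 := by
    rintro rfl
    exact (hf.mul hh).ne_zero (by simpa using hfh)
  have hf0 := isUnit_coeff_zero_of_dvd_X_pow_sub_one hN (Dvd.intro h hfh)
  have hh0 := isUnit_coeff_zero_of_dvd_X_pow_sub_one hN (Dvd.intro_left f hfh)
  have hmul : recip f * recip h = f * h := by
    rw [← recip_mul hf hh hf0 hh0, hfh, recip_X_pow_sub_one]
  have hrh : recip h = h :=
    recip_eq_self_of_dvd hh hh0 (hcop.dvd_of_dvd_mul_left ⟨f, by rw [hmul, mul_comm]⟩)
  have hrf : recip f = f := hh.isRegular.right (by rwa [hrh] at hmul)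
  rw [hrh]
  rw [hrf] at hcop
  exact hcop.symm

theorem coprime_recip_swap (N : ℕ) (hN : Odd N) (f h : (ZMod 4)[X])
    (hf : f.Monic) (hh : h.Monic)
    (hfh : f * h = (X : (ZMod 4)[X]) ^ N - 1)
    (hcop : IsCoprime h (recip f)) :
    IsCoprime f (recip h) :=
  coprime_recip_swap_general N f h hf hh hfh hcop
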